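/- (Bias-corrected weighting identification under violation of principal ignorability.) Fix z ∈ {1,...,J} and g ∈ {J−z+1,...,J}. Assume randomization, monotonicity, the positivity condition, that e_{g′}(X) > 0 P-a.s. for every g′ ∈ {J−z+1,...,J}, that the bounded measurable sensitivity functions δ_{z,g′} : 𝒳 → ℝ satisfy δ_{z,J}(X) = 1 and E[Y_z·1(G=g′) | σ(X)]·e_J(X) = δ_{z,g′}(X)·E[Y_z·1(G=J) | σ(X)]·e_{g′}(X) P-a.s., and that there is c′ > 0 with Σ_{g′=J−z+1}^J δ_{z,g′}(X)·(p_{J−g′+1}(X) − p_{J−g′}(X)) ≥ c′ P-a.s. Define Ω_{zg}(X) := δ_{z,g}(X)·p_z(X)/Σ_{g′=J−z+1}^J δ_{z,g′}(X)·(p_{J−g′+1}(X) − p_{J−g′}(X)). Then π_z·E[Y_z·1(G=g)] = E[Ω_{zg}(X)·((p_{J−g+1}(X) − p_{J−g}(X))/p_z(X))·Y·S·1(Z=z)]. -/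

import Mathlib

/-!
Under monotonicity `k ↦ S_k` is a `0/1` step function that jumps at level `J - G + 1`. Hence
`1(G = g) = S_{J-g+1} - S_{J-g}` (with `S_0 = 0`), so `e_g = p_{J-g+1} - p_{J-g}`, and
`S_z = ∑_{g ≥ J-z+1} 1(G = g)`.

After cancelling `p_z` the weight is `w = δ_g e_g / ∑_{g'} δ_{g'} e_{g'}`, a function of `X`.
Randomization turns the observed integrand into `π_z E[w Y_z S_z]`, and conditioning on `X`
replaces `Y_z S_z` by `∑_{g'} E[Y_z 1(G = g') | X]`. The sensitivity relation makes the `g'`-th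
term equal to `δ_{g'} e_{g'} E[Y_z 1(G = J) | X] / e_J` (note `e_J = p_1 > 0`), so the weighted sum
collapses to `E[Y_z 1(G = g) | X]`.
-/

open MeasureTheory ProbabilityTheory

noncomputable section

namespace TruncationByDeath

variable {Ω : Type*} {𝒳 : Type*} [MeasurableSpace Ω] [MeasurableSpace 𝒳]

/-- The σ-algebra on `Ω` generated by the covariate map `X`. -/
def mX (X : Ω → 𝒳) : MeasurableSpace Ω := MeasurableSpace.comap X inferInstance

/-- Real-valued indicator of the event `{Z = z}`. -/
def indic (Z : Ω → ℕ) (z : ℕ) : Ω → ℝ := fun ω => if Z ω = z then 1 else 0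

/-- Observed survival status `S := ∑_z 1(Z=z) ⬝ S_z`. -/
def Sobs (J : ℕ) (Z : Ω → ℕ) (S : ℕ → Ω → ℝ) : Ω → ℝ :=
  fun ω => ∑ z ∈ Finset.Icc 1 J, indic Z z ω * S z ω

/-- Observed outcome `Y := ∑_z 1(Z=z) ⬝ Y_z`. -/
def Yobs (J : ℕ) (Z : Ω → ℕ) (Y : ℕ → Ω → ℝ) : Ω → ℝ :=
  fun ω => ∑ z ∈ Finset.Icc 1 J, indic Z z ω * Y z ω

/-- Principal score `p_z(X) := E[S_z | σ(X)]`, with conventions `p_0 := 0` and `p_{J+1} := 1`. -/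
def pscore (P : Measure Ω) (X : Ω → 𝒳) (S : ℕ → Ω → ℝ) (J : ℕ) (z : ℕ) : Ω → ℝ :=
  if z = 0 then fun _ => 0 else if z = J + 1 then fun _ => 1 else P[S z | mX X]

/-- Treatment probability `π_z := P(Z = z)`. -/
def piZ (P : Measure Ω) (Z : Ω → ℕ) (z : ℕ) : ℝ := (P {ω | Z ω = z}).toReal

/-- Principal stratum variable `G := ∑_{z=1}^J S_z`. -/
def Gsum (J : ℕ) (S : ℕ → Ω → ℝ) : Ω → ℝ := fun ω => ∑ z ∈ Finset.Icc 1 J, S z ω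

/-- Real-valued indicator of the event `{G = g}`. -/
def indG (J : ℕ) (S : ℕ → Ω → ℝ) (g : ℕ) : Ω → ℝ :=
  Set.indicator {ω | Gsum J S ω = (g : ℝ)} (fun _ => (1 : ℝ))

/-- Principal score of the stratum `g` : `e_g(X) := E[1(G=g) | σ(X)]`. -/
def eg (P : Measure Ω) (X : Ω → 𝒳) (J : ℕ) (S : ℕ → Ω → ℝ) (g : ℕ) : Ω → ℝ :=
  P[indG J S g | mX X]

/-- Basic setup: measurability, ranges, values and integrability of the primitives. -/
structure Setup (P : Measure Ω) (J : ℕ) (X : Ω → 𝒳) (Z : Ω → ℕ)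
    (S Y : ℕ → Ω → ℝ) : Prop where
  hJ : 2 ≤ J
  hX : Measurable X
  hZ : Measurable Z
  hZr : ∀ ω, Z ω ∈ Finset.Icc 1 J
  hSm : ∀ z, Measurable (S z)
  hS01 : ∀ z ω, S z ω = 0 ∨ S z ω = 1
  hYm : ∀ z, Measurable (Y z)
  hYint : ∀ z, Integrable (Y z) P

/-- Randomization : `Z` is independent of `(X, S_1,…,S_J, Y_1,…,Y_J)` and `π_z > 0` for all
`z ∈ {1,…,J}`. -/
def Randomization (P : Measure Ω) (J : ℕ) (X : Ω → 𝒳) (Z : Ω → ℕ)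
    (S Y : ℕ → Ω → ℝ) : Prop :=
  IndepFun Z (fun ω => (X ω, fun z => S z ω, fun z => Y z ω)) P ∧
    ∀ z ∈ Finset.Icc 1 J, 0 < piZ P Z z

/-- Monotonicity : `S_{z'} ≤ S_z` a.s. whenever `z' ≤ z`. -/
def Monotonicity (P : Measure Ω) (J : ℕ) (S : ℕ → Ω → ℝ) : Prop :=
  ∀ z ∈ Finset.Icc 1 J, ∀ z' ∈ Finset.Icc 1 J, z' ≤ z → ∀ᵐ ω ∂P, S z' ω ≤ S z ω

/-- Principal ignorability. -/
def PrincipalIgnorability (P : Measure Ω) (J : ℕ) (X : Ω → 𝒳)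
    (S Y : ℕ → Ω → ℝ) : Prop :=
  ∀ z ∈ Finset.Icc 1 J, ∀ g ∈ Finset.Icc (J - z + 1) J, ∀ g' ∈ Finset.Icc (J - z + 1) J,
    (fun ω => (P[fun ω' => Y z ω' * indG J S g ω' | mX X]) ω * eg P X J S g' ω)
      =ᵐ[P] fun ω => (P[fun ω' => Y z ω' * indG J S g' ω' | mX X]) ω * eg P X J S g ω

/-- Positivity : the principal scores are uniformly bounded away from zero. -/
def Positivity (P : Measure Ω) (J : ℕ) (X : Ω → 𝒳) (S : ℕ → Ω → ℝ) : Prop :=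
  ∃ c : ℝ, 0 < c ∧ ∀ z ∈ Finset.Icc 1 J, ∀ᵐ ω ∂P, c ≤ pscore P X S J z ω

section Threshold

variable {J : ℕ} {s : ℕ → ℝ}

lemma exists_threshold_of_monotoneOn (h01 : ∀ k, s k = 0 ∨ s k = 1)
    (hmono : MonotoneOn s (Set.Icc 1 J)) (h0 : s 0 = 0) :
    ∃ m ≤ J, ∀ k ≤ J, s k = if J < k + m then 1 else 0 := by
  classical
  have hex : ∃ a, J + 1 ≤ a ∨ (1 ≤ a ∧ s a = 1) := ⟨J + 1, Or.inl le_rfl⟩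
  have ha1 : 1 ≤ Nat.find hex := by rcases Nat.find_spec hex with h | h <;> omega
  refine ⟨J + 1 - Nat.find hex, by omega, fun k hk => ?_⟩
  by_cases hak : Nat.find hex ≤ k
  · have hsa : s (Nat.find hex) = 1 := by
      rcases Nat.find_spec hex with h | h
      · omega
      · exact h.2
    have hle := hmono ⟨ha1, by omega⟩ ⟨by omega, hk⟩ hak
    rw [if_pos (by omega)]
    rcases h01 k with h | h <;> linarith
  · have hmin := Nat.find_min hex (not_le.mp hak)
    rw [if_neg (by omega)]
    rcases Nat.eq_zero_or_pos k with rfl | hpos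
    · exact h0
    · exact (h01 k).resolve_right fun h => hmin (Or.inr ⟨hpos, h⟩)

lemma sum_Icc_ite_lt_add {m : ℕ} (hm : m ≤ J) :
    ∑ k ∈ Finset.Icc 1 J, (if J < k + m then (1 : ℝ) else 0) = m := by
  rw [Finset.sum_boole]
  have : (Finset.Icc 1 J).filter (fun k => J < k + m) = Finset.Icc (J + 1 - m) J := by
    ext k; simp only [Finset.mem_filter, Finset.mem_Icc]; omega
  rw [this, Nat.card_Icc]
  congr 1
  omega

lemma ite_sum_eq_sub_of_monotoneOn (h01 : ∀ k, s k = 0 ∨ s k = 1)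
    (hmono : MonotoneOn s (Set.Icc 1 J)) (h0 : s 0 = 0) {g : ℕ} (hg : g ∈ Finset.Icc 1 J) :
    (if ∑ k ∈ Finset.Icc 1 J, s k = g then (1 : ℝ) else 0) = s (J - g + 1) - s (J - g) := by
  obtain ⟨m, hm, hs⟩ := exists_threshold_of_monotoneOn h01 hmono h0
  rw [Finset.mem_Icc] at hg
  rw [Finset.sum_congr rfl fun k hk => hs k (Finset.mem_Icc.mp hk).2, sum_Icc_ite_lt_add hm,
    hs _ (by omega), hs _ (by omega)]
  simp only [Nat.cast_inj]
  split_ifs <;> norm_num <;> omega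

lemma eq_sum_ite_sum_of_monotoneOn (h01 : ∀ k, s k = 0 ∨ s k = 1)
    (hmono : MonotoneOn s (Set.Icc 1 J)) (h0 : s 0 = 0) {z : ℕ} (hz : z ≤ J) :
    s z = ∑ g ∈ Finset.Icc (J - z + 1) J,
      (if ∑ k ∈ Finset.Icc 1 J, s k = g then (1 : ℝ) else 0) := by
  obtain ⟨m, hm, hs⟩ := exists_threshold_of_monotoneOn h01 hmono h0
  simp_rw [Finset.sum_congr rfl fun k hk => hs k (Finset.mem_Icc.mp hk).2, sum_Icc_ite_lt_add hm,
    Nat.cast_inj, Finset.sum_ite_eq, Finset.mem_Icc, hs z hz]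
  congr 1
  exact propext (by omega)

end Threshold

lemma div_sum_mul_sum_eq {ι : Type*} {I : Finset ι} {i₀ j : ι} (hi₀ : i₀ ∈ I) {δ m e : ι → ℝ}
    (hej : e j ≠ 0) (hD : ∑ i ∈ I, δ i * e i ≠ 0)
    (hrel : ∀ i ∈ I, m i * e j = δ i * m j * e i) :
    δ i₀ * e i₀ / (∑ i ∈ I, δ i * e i) * ∑ i ∈ I, m i = m i₀ := by
  have hsum : (∑ i ∈ I, m i) * e j = m j * ∑ i ∈ I, δ i * e i := by
    rw [Finset.sum_mul, Finset.mul_sum]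
    exact Finset.sum_congr rfl fun i hi => by rw [hrel i hi]; ring
  rw [eq_div_of_mul_eq hej hsum, ← mul_left_inj' hej, hrel i₀ hi₀]
  field_simp

lemma integral_mul_condExp {α : Type*} {m m₀ : MeasurableSpace α} {μ : Measure α} (hm : m ≤ m₀)
    [SigmaFinite (μ.trim hm)] {w f : α → ℝ} (hw : StronglyMeasurable[m] w)
    (hwf : Integrable (fun ω => w ω * f ω) μ) (hf : Integrable f μ) :
    ∫ ω, w ω * f ω ∂μ = ∫ ω, w ω * μ[f | m] ω ∂μ :=
  (integral_condExp hm).symm.trans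
    (integral_congr_ae (condExp_mul_of_stronglyMeasurable_left hw hwf hf))

lemma integral_indic_mul_of_indepFun {β : Type*} [MeasurableSpace β] {P : Measure Ω}
    {Z : Ω → ℕ} {T : Ω → β} (hZ : Measurable Z) (hT : Measurable T) (hZT : IndepFun Z T P)
    {W : Ω → ℝ} (hW : Measurable[MeasurableSpace.comap T inferInstance] W) (z : ℕ) :
    ∫ ω, indic Z z ω * W ω ∂P = piZ P Z z * ∫ ω, W ω ∂P := by
  have hindic : Measurable[MeasurableSpace.comap Z inferInstance] (indic Z z) :=
    (measurable_from_nat (f := fun n => if n = z then (1 : ℝ) else 0)).comp (comap_measurable Z)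
  have hind : IndepFun (indic Z z) W P := by
    rw [IndepFun_iff_Indep] at hZT ⊢
    exact indep_of_indep_of_le_left (indep_of_indep_of_le_right hZT hW.comap_le)
      hindic.comap_le
  have hindic_eq : indic Z z = {ω | Z ω = z}.indicator fun _ => 1 := by
    ext ω
    simp only [indic, Set.indicator_apply, Set.mem_ofPred_eq]
  have hpi : piZ P Z z = ∫ ω, indic Z z ω ∂P := by
    rw [hindic_eq, integral_indicator_const (s := {ω | Z ω = z}) _
      (hZ (measurableSet_singleton z)), smul_eq_mul, mul_one]
    rfl
  rw [hpi]
  exact hind.integral_mul_eq_mul_integral (hindic.mono hZ.comap_le le_rfl).aestronglyMeasurable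
    (hW.mono hT.comap_le le_rfl).aestronglyMeasurable

section Survival

variable {α : Type*} {J z : ℕ} {Z : α → ℕ} {S : ℕ → α → ℝ}

def survivalExt (S : ℕ → α → ℝ) (k : ℕ) : α → ℝ := if k = 0 then 0 else S k

lemma survivalExt_of_ne_zero {k : ℕ} (hk : k ≠ 0) : survivalExt S k = S k := if_neg hk

lemma survivalExt_apply_eq_zero_or_eq_one (hS01 : ∀ k ω, S k ω = 0 ∨ S k ω = 1) (k : ℕ)
    (ω : α) : survivalExt S k ω = 0 ∨ survivalExt S k ω = 1 := by
  unfold survivalExt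
  split_ifs
  · exact Or.inl rfl
  · exact hS01 k ω

lemma sum_survivalExt_eq_Gsum (ω : α) :
    ∑ k ∈ Finset.Icc 1 J, survivalExt S k ω = Gsum J S ω :=
  Finset.sum_congr rfl fun k hk => by
    rw [survivalExt_of_ne_zero (Nat.one_le_iff_ne_zero.mp (Finset.mem_Icc.mp hk).1)]

lemma indG_apply (g : ℕ) (ω : α) : indG J S g ω = if Gsum J S ω = g then 1 else 0 := by
  simp only [indG, Set.indicator_apply, Set.mem_ofPred_eq]

lemma Yobs_eq_of_eq {F : ℕ → α → ℝ} {ω : α} (hz : z ∈ Finset.Icc 1 J) (h : Z ω = z) :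
    Yobs J Z F ω = F z ω := by
  simp [Yobs, indic, h, hz]

lemma Yobs_mul_Sobs_mul_indic {Y : ℕ → α → ℝ} (hz : z ∈ Finset.Icc 1 J) (ω : α) :
    Yobs J Z Y ω * Sobs J Z S ω * indic Z z ω = indic Z z ω * (Y z ω * S z ω) := by
  by_cases h : Z ω = z
  · rw [Yobs_eq_of_eq hz h, show Sobs J Z S ω = S z ω from Yobs_eq_of_eq hz h]
    ring
  · simp [indic, h]

end Survival

section Strata

variable {P : Measure Ω} {J : ℕ} {S : ℕ → Ω → ℝ}

lemma Monotonicity.ae_monotoneOn (h : Monotonicity P J S) :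
    ∀ᵐ ω ∂P, MonotoneOn (fun k => survivalExt S k ω) (Set.Icc 1 J) := by
  have h' : ∀ᵐ ω ∂P, ∀ k ∈ Finset.Icc 1 J, ∀ k' ∈ Finset.Icc 1 J, k' ≤ k → S k' ω ≤ S k ω := by
    simp only [Filter.eventually_all_finset, Filter.eventually_imp_distrib_left]
    exact h
  filter_upwards [h'] with ω hω k' hk' k hk hle
  simp only [survivalExt_of_ne_zero (Nat.one_le_iff_ne_zero.mp hk.1),
    survivalExt_of_ne_zero (Nat.one_le_iff_ne_zero.mp hk'.1)]
  exact hω k (Finset.mem_Icc.mpr hk) k' (Finset.mem_Icc.mpr hk') hle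

lemma indG_ae_eq_sub (hS01 : ∀ k ω, S k ω = 0 ∨ S k ω = 1) (hmono : Monotonicity P J S)
    {g : ℕ} (hg : g ∈ Finset.Icc 1 J) :
    indG J S g =ᵐ[P] survivalExt S (J - g + 1) - survivalExt S (J - g) := by
  filter_upwards [hmono.ae_monotoneOn] with ω hω
  rw [indG_apply, ← sum_survivalExt_eq_Gsum]
  exact ite_sum_eq_sub_of_monotoneOn (survivalExt_apply_eq_zero_or_eq_one hS01 · ω) hω rfl hg

lemma ae_eq_sum_indG (hS01 : ∀ k ω, S k ω = 0 ∨ S k ω = 1) (hmono : Monotonicity P J S)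
    {z : ℕ} (hz : z ∈ Finset.Icc 1 J) :
    S z =ᵐ[P] ∑ g ∈ Finset.Icc (J - z + 1) J, indG J S g := by
  filter_upwards [hmono.ae_monotoneOn] with ω hω
  rw [← survivalExt_of_ne_zero (S := S) (Nat.one_le_iff_ne_zero.mp (Finset.mem_Icc.mp hz).1)]
  simp only [Finset.sum_apply, indG_apply, ← sum_survivalExt_eq_Gsum]
  exact eq_sum_ite_sum_of_monotoneOn (survivalExt_apply_eq_zero_or_eq_one hS01 · ω) hω rfl
    (Finset.mem_Icc.mp hz).2

end Strata

section Scores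

variable {P : Measure Ω} {J : ℕ} {X : Ω → 𝒳} {Z : Ω → ℕ} {S Y : ℕ → Ω → ℝ}

lemma Setup.integrable_survival [IsFiniteMeasure P] (h : Setup P J X Z S Y) (k : ℕ) :
    Integrable (S k) P :=
  (integrable_const (1 : ℝ)).mono' (h.hSm k).aestronglyMeasurable
    (ae_of_all _ fun ω => by rcases h.hS01 k ω with hk | hk <;> simp [hk])

lemma Setup.measurable_indG (h : Setup P J X Z S Y) (g : ℕ) : Measurable (indG J S g) :=
  measurable_const.indicator
    (Finset.measurable_sum _ (fun k _ => h.hSm k) (measurableSet_singleton _))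

lemma Setup.integrable_mul_indG (h : Setup P J X Z S Y) (z g : ℕ) :
    Integrable (fun ω => Y z ω * indG J S g ω) P :=
  (h.hYint z).mul_bdd (c := 1) (h.measurable_indG g).aestronglyMeasurable
    (ae_of_all _ fun ω => by rw [indG_apply]; split_ifs <;> simp)

lemma Setup.integrable_mul_survival (h : Setup P J X Z S Y) (z : ℕ) :
    Integrable (fun ω => Y z ω * S z ω) P :=
  (h.hYint z).mul_bdd (c := 1) (h.hSm z).aestronglyMeasurable
    (ae_of_all _ fun ω => by rcases h.hS01 z ω with hz | hz <;> simp [hz])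

lemma pscore_zero : pscore P X S J 0 = 0 := if_pos rfl

lemma pscore_eq_condExp {k : ℕ} (hk : k ≤ J) :
    pscore P X S J k = P[survivalExt S k | mX X] := by
  unfold pscore survivalExt
  split_ifs
  · exact (condExp_zero (E := ℝ)).symm
  · omega
  · rfl

lemma stronglyMeasurable_pscore (k : ℕ) : StronglyMeasurable[mX X] (pscore P X S J k) := by
  unfold pscore
  split_ifs
  · exact stronglyMeasurable_const
  · exact stronglyMeasurable_const
  · exact stronglyMeasurable_condExp

lemma ae_abs_pscore_le_one (hS01 : ∀ k ω, S k ω = 0 ∨ S k ω = 1) (k : ℕ) :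
    ∀ᵐ ω ∂P, |pscore P X S J k ω| ≤ 1 := by
  unfold pscore
  split_ifs
  · simp
  · simp
  · exact ae_bdd_abs_condExp_of_ae_bdd_abs
      (ae_of_all _ fun ω => by rcases hS01 k ω with hk | hk <;> simp [hk])

def stratumScore (P : Measure Ω) (X : Ω → 𝒳) (S : ℕ → Ω → ℝ) (J g : ℕ) : Ω → ℝ :=
  fun ω => pscore P X S J (J - g + 1) ω - pscore P X S J (J - g) ω

lemma stratumScore_self : stratumScore P X S J J = pscore P X S J 1 := by
  ext ω
  simp [stratumScore, pscore_zero]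

lemma eg_ae_eq_stratumScore (hint : ∀ k, Integrable (S k) P)
    (hS01 : ∀ k ω, S k ω = 0 ∨ S k ω = 1) (hmono : Monotonicity P J S)
    {g : ℕ} (hg : g ∈ Finset.Icc 1 J) : eg P X J S g =ᵐ[P] stratumScore P X S J g := by
  have hint' : ∀ k, Integrable (survivalExt S k) P := fun k => by
    unfold survivalExt; split_ifs
    · exact integrable_zero _ _ _
    · exact hint k
  obtain ⟨hg1, hgJ⟩ := Finset.mem_Icc.mp hg
  refine (condExp_congr_ae (indG_ae_eq_sub hS01 hmono hg)).trans
    ((condExp_sub (hint' _) (hint' _) _).trans (ae_of_all _ fun ω => ?_))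
  simp only [stratumScore, pscore_eq_condExp (by omega : J - g + 1 ≤ J),
    pscore_eq_condExp (by omega : J - g ≤ J), Pi.sub_apply]

lemma condExp_mul_survival_ae_eq_sum (h : Setup P J X Z S Y) (hmono : Monotonicity P J S)
    {z : ℕ} (hz : z ∈ Finset.Icc 1 J) :
    P[fun ω => Y z ω * S z ω | mX X] =ᵐ[P] fun ω =>
      ∑ g ∈ Finset.Icc (J - z + 1) J, (P[fun ω' => Y z ω' * indG J S g ω' | mX X]) ω := by
  have hYS : (fun ω => Y z ω * S z ω)
      =ᵐ[P] ∑ g ∈ Finset.Icc (J - z + 1) J, fun ω => Y z ω * indG J S g ω := by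
    filter_upwards [ae_eq_sum_indG h.hS01 hmono hz] with ω hω
    simp only [hω, Finset.sum_apply, Finset.mul_sum]
  filter_upwards [condExp_congr_ae (m := mX X) hYS,
    condExp_finsetSum (fun g _ => h.integrable_mul_indG z g) (mX X)] with ω h1 h2
  rw [h1, h2, Finset.sum_apply]

end Scores

section Weight

variable {P : Measure Ω} {J : ℕ} {X : Ω → 𝒳} {S : ℕ → Ω → ℝ} {δ : ℕ → 𝒳 → ℝ} {z g : ℕ}

def sensitivityNormalizer (P : Measure Ω) (X : Ω → 𝒳) (S : ℕ → Ω → ℝ) (J : ℕ)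
    (δ : ℕ → 𝒳 → ℝ) (z : ℕ) : Ω → ℝ :=
  fun ω => ∑ g' ∈ Finset.Icc (J - z + 1) J, δ g' (X ω) * stratumScore P X S J g' ω

/-- `Ω_{zg} · (p_{J-g+1} - p_{J-g}) / p_z` with `p_z` cancelled; the two agree where `p_z ≠ 0`. -/
def correctedWeight (P : Measure Ω) (X : Ω → 𝒳) (S : ℕ → Ω → ℝ) (J : ℕ)
    (δ : ℕ → 𝒳 → ℝ) (z g : ℕ) : Ω → ℝ :=
  fun ω => δ g (X ω) * stratumScore P X S J g ω / sensitivityNormalizer P X S J δ z ω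

lemma weight_eq_correctedWeight {ω : Ω} (hpz : pscore P X S J z ω ≠ 0) :
    (δ g (X ω) * pscore P X S J z ω
        / ∑ g' ∈ Finset.Icc (J - z + 1) J,
            δ g' (X ω) * (pscore P X S J (J - g' + 1) ω - pscore P X S J (J - g') ω))
      * ((pscore P X S J (J - g + 1) ω - pscore P X S J (J - g) ω) / pscore P X S J z ω)
      = correctedWeight P X S J δ z g ω := by
  simp only [correctedWeight, sensitivityNormalizer, stratumScore]
  field_simp

lemma measurable_stratumScore : Measurable[mX X] (stratumScore P X S J g) :=
  (stronglyMeasurable_pscore _).measurable.sub (stronglyMeasurable_pscore _).measurable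

lemma stronglyMeasurable_correctedWeight
    (hδm : ∀ g' ∈ Finset.Icc (J - z + 1) J, Measurable (δ g')) (hg : g ∈ Finset.Icc (J - z + 1) J) :
    StronglyMeasurable[mX X] (correctedWeight P X S J δ z g) := by
  have hX : Measurable[mX X] X := comap_measurable X
  refine Measurable.stronglyMeasurable (((hδm g hg).comp hX).mul measurable_stratumScore |>.div ?_)
  exact Finset.measurable_sum _ fun g' hg' => ((hδm g' hg').comp hX).mul measurable_stratumScore

lemma ae_norm_correctedWeight_le (hS01 : ∀ k ω, S k ω = 0 ∨ S k ω = 1) {C c' : ℝ}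
    (hC : ∀ x, |δ g x| ≤ C) (hc' : 0 < c')
    (hD : ∀ᵐ ω ∂P, c' ≤ sensitivityNormalizer P X S J δ z ω) :
    ∀ᵐ ω ∂P, ‖correctedWeight P X S J δ z g ω‖ ≤ C * 2 / c' := by
  filter_upwards [hD, ae_abs_pscore_le_one (X := X) (J := J) hS01 (J - g + 1),
    ae_abs_pscore_le_one (X := X) (J := J) hS01 (J - g)] with ω hDω h1 h2
  have hq : |stratumScore P X S J g ω| ≤ 2 := (abs_sub _ _).trans (by linarith)
  rw [Real.norm_eq_abs, correctedWeight, abs_div, abs_mul, abs_of_pos (hc'.trans_le hDω)]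
  exact div_le_div₀ (by linarith [(abs_nonneg _).trans (hC (X ω))])
    (mul_le_mul (hC _) hq (abs_nonneg _) ((abs_nonneg _).trans (hC (X ω)))) hc' hDω

end Weight

lemma ae_correctedWeight_mul_sum_condExp {P : Measure Ω} {J : ℕ} {X : Ω → 𝒳}
    {S Y : ℕ → Ω → ℝ} {δ : ℕ → 𝒳 → ℝ} {z g : ℕ} (hint : ∀ k, Integrable (S k) P)
    (hS01 : ∀ k ω, S k ω = 0 ∨ S k ω = 1) (hmono : Monotonicity P J S)
    (hz : z ∈ Finset.Icc 1 J) (hg : g ∈ Finset.Icc (J - z + 1) J)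
    (hp1 : ∀ᵐ ω ∂P, 0 < pscore P X S J 1 ω)
    (hD : ∀ᵐ ω ∂P, sensitivityNormalizer P X S J δ z ω ≠ 0)
    (hδdef : ∀ g' ∈ Finset.Icc (J - z + 1) J,
      (fun ω => (P[fun ω' => Y z ω' * indG J S g' ω' | mX X]) ω * eg P X J S J ω)
        =ᵐ[P] fun ω =>
          δ g' (X ω) * (P[fun ω' => Y z ω' * indG J S J ω' | mX X]) ω * eg P X J S g' ω) :
    ∀ᵐ ω ∂P, correctedWeight P X S J δ z g ω *
        ∑ g' ∈ Finset.Icc (J - z + 1) J, (P[fun ω' => Y z ω' * indG J S g' ω' | mX X]) ω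
      = (P[fun ω' => Y z ω' * indG J S g ω' | mX X]) ω := by
  obtain ⟨hz1, hzJ⟩ := Finset.mem_Icc.mp hz
  have hJ : J ∈ Finset.Icc (J - z + 1) J := Finset.mem_Icc.mpr ⟨by omega, le_rfl⟩
  have he : ∀ᵐ ω ∂P, ∀ g' ∈ Finset.Icc (J - z + 1) J,
      eg P X J S g' ω = stratumScore P X S J g' ω :=
    (Filter.eventually_all_finset _).2 fun g' hg' => by
      obtain ⟨hg'1, hg'J⟩ := Finset.mem_Icc.mp hg'
      exact eg_ae_eq_stratumScore hint hS01 hmono (Finset.mem_Icc.mpr ⟨by omega, hg'J⟩)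
  filter_upwards [he, (Filter.eventually_all_finset _).2 hδdef, hp1, hD]
    with ω heω hrelω hp1ω hDω
  refine div_sum_mul_sum_eq hg (j := J) (e := fun i => stratumScore P X S J i ω) ?_ hDω
    fun i hi => ?_
  · simpa only [stratumScore_self] using hp1ω.ne'
  · simpa only [heω i hi, heω J hJ] using hrelω i hi

lemma Randomization.integral_indic_mul {P : Measure Ω} {J : ℕ} {X : Ω → 𝒳} {Z : Ω → ℕ}
    {S Y : ℕ → Ω → ℝ} (hset : Setup P J X Z S Y) (hrand : Randomization P J X Z S Y)
    {w : Ω → ℝ} (hw : Measurable[mX X] w) (z : ℕ) :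
    ∫ ω, indic Z z ω * (w ω * (Y z ω * S z ω)) ∂P = piZ P Z z * ∫ ω, w ω * (Y z ω * S z ω) ∂P := by
  have hT : Measurable[MeasurableSpace.comap (fun ω => (X ω, fun k => S k ω, fun k => Y k ω))
      inferInstance] fun ω => (X ω, fun k => S k ω, fun k => Y k ω) := comap_measurable _
  refine integral_indic_mul_of_indepFun hset.hZ ?_ hrand.1 ?_ z
  · exact hset.hX.prodMk ((measurable_pi_lambda _ hset.hSm).prodMk
      (measurable_pi_lambda _ hset.hYm))
  · exact (hw.mono (measurable_fst.comp hT).comap_le le_rfl).mul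
      (((measurable_pi_apply z).comp (measurable_snd.comp (measurable_snd.comp hT))).mul
        ((measurable_pi_apply z).comp (measurable_fst.comp (measurable_snd.comp hT))))

theorem statement17_general (P : Measure Ω) [IsProbabilityMeasure P] (J : ℕ)
    (X : Ω → 𝒳) (Z : Ω → ℕ) (S Y : ℕ → Ω → ℝ)
    (hset : Setup P J X Z S Y)
    (hrand : Randomization P J X Z S Y)
    (hmono : Monotonicity P J S)
    (hpos : Positivity P J X S)
    (z g : ℕ) (hz : z ∈ Finset.Icc 1 J) (hg : g ∈ Finset.Icc (J - z + 1) J)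
    (δ : ℕ → 𝒳 → ℝ)
    (hδm : ∀ g' ∈ Finset.Icc (J - z + 1) J, Measurable (δ g'))
    (hδb : ∀ g' ∈ Finset.Icc (J - z + 1) J, ∃ C, ∀ x, |δ g' x| ≤ C)
    (hδdef : ∀ g' ∈ Finset.Icc (J - z + 1) J,
      (fun ω => (P[fun ω' => Y z ω' * indG J S g' ω' | mX X]) ω * eg P X J S J ω)
        =ᵐ[P] fun ω =>
          δ g' (X ω) * (P[fun ω' => Y z ω' * indG J S J ω' | mX X]) ω * eg P X J S g' ω)
    (hden : ∃ c' : ℝ, 0 < c' ∧ ∀ᵐ ω ∂P,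
      c' ≤ ∑ g' ∈ Finset.Icc (J - z + 1) J,
        δ g' (X ω) * (pscore P X S J (J - g' + 1) ω - pscore P X S J (J - g') ω)) :
    piZ P Z z * ∫ ω, Y z ω * indG J S g ω ∂P
      = ∫ ω,
          (δ g (X ω) * pscore P X S J z ω
              / ∑ g' ∈ Finset.Icc (J - z + 1) J,
                  δ g' (X ω) * (pscore P X S J (J - g' + 1) ω - pscore P X S J (J - g') ω))
            * ((pscore P X S J (J - g + 1) ω - pscore P X S J (J - g) ω)
                / pscore P X S J z ω)
            * (Yobs J Z Y ω * Sobs J Z S ω * indic Z z ω) ∂P := by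
  obtain ⟨c, hc, hcp⟩ := hpos
  obtain ⟨c', hc', hcD⟩ := hden
  obtain ⟨C, hC⟩ := hδb g hg
  have hm : mX X ≤ ‹MeasurableSpace Ω› := hset.hX.comap_le
  set w := correctedWeight P X S J δ z g
  have hw : StronglyMeasurable[mX X] w := stronglyMeasurable_correctedWeight hδm hg
  have hp1 : ∀ᵐ ω ∂P, 0 < pscore P X S J 1 ω := by
    obtain ⟨hz1, hzJ⟩ := Finset.mem_Icc.mp hz
    exact (hcp 1 (Finset.mem_Icc.mpr ⟨le_rfl, hz1.trans hzJ⟩)).mono fun ω h => hc.trans_le h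
  calc piZ P Z z * ∫ ω, Y z ω * indG J S g ω ∂P
      = piZ P Z z * ∫ ω, w ω * ∑ g' ∈ Finset.Icc (J - z + 1) J,
          (P[fun ω' => Y z ω' * indG J S g' ω' | mX X]) ω ∂P := by
        rw [integral_congr_ae (ae_correctedWeight_mul_sum_condExp hset.integrable_survival
          hset.hS01 hmono hz hg hp1 (hcD.mono fun ω h => (hc'.trans_le h).ne') hδdef),
          integral_condExp hm]
    _ = piZ P Z z * ∫ ω, w ω * (P[fun ω' => Y z ω' * S z ω' | mX X]) ω ∂P := by
        refine congrArg _ (integral_congr_ae ?_)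
        filter_upwards [condExp_mul_survival_ae_eq_sum hset hmono hz] with ω hω
        rw [hω]
    _ = piZ P Z z * ∫ ω, w ω * (Y z ω * S z ω) ∂P := by
        rw [integral_mul_condExp hm hw _ (hset.integrable_mul_survival z)]
        exact (hset.integrable_mul_survival z).bdd_mul (hw.mono hm).aestronglyMeasurable
          (ae_norm_correctedWeight_le hset.hS01 hC hc' hcD)
    _ = ∫ ω, indic Z z ω * (w ω * (Y z ω * S z ω)) ∂P :=
        (hrand.integral_indic_mul hset hw.measurable z).symm
    _ = _ := by
        refine integral_congr_ae ?_
        filter_upwards [hcp z hz] with ω hpz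
        rw [Yobs_mul_Sobs_mul_indic hz, weight_eq_correctedWeight (hc.trans_le hpz).ne']
        ring

/-- **bias-corrected weighting identification under violation of principal
ignorability.** With the sensitivity weight
`Ω_{zg}(X) := δ_{z,g}(X)·p_z(X) / ∑_{g'} δ_{z,g'}(X)·(p_{J−g'+1}(X) − p_{J−g'}(X))`,
one has `π_z·E[Y_z·1(G=g)] = E[Ω_{zg}(X)·((p_{J−g+1}(X) − p_{J−g}(X))/p_z(X))·Y·S·1(Z=z)]`. -/
theorem statement17 (P : Measure Ω) [IsProbabilityMeasure P] (J : ℕ)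
    (X : Ω → 𝒳) (Z : Ω → ℕ) (S Y : ℕ → Ω → ℝ)
    (hset : Setup P J X Z S Y)
    (hrand : Randomization P J X Z S Y)
    (hmono : Monotonicity P J S)
    (hpos : Positivity P J X S)
    (z g : ℕ) (hz : z ∈ Finset.Icc 1 J) (hg : g ∈ Finset.Icc (J - z + 1) J)
    (hepos : ∀ g' ∈ Finset.Icc (J - z + 1) J, ∀ᵐ ω ∂P, 0 < eg P X J S g' ω)
    (δ : ℕ → 𝒳 → ℝ)
    (hδm : ∀ g' ∈ Finset.Icc (J - z + 1) J, Measurable (δ g'))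
    (hδb : ∀ g' ∈ Finset.Icc (J - z + 1) J, ∃ C, ∀ x, |δ g' x| ≤ C)
    (hδJ : ∀ x, δ J x = 1)
    (hδdef : ∀ g' ∈ Finset.Icc (J - z + 1) J,
      (fun ω => (P[fun ω' => Y z ω' * indG J S g' ω' | mX X]) ω * eg P X J S J ω)
        =ᵐ[P] fun ω =>
          δ g' (X ω) * (P[fun ω' => Y z ω' * indG J S J ω' | mX X]) ω * eg P X J S g' ω)
    (hden : ∃ c' : ℝ, 0 < c' ∧ ∀ᵐ ω ∂P,
      c' ≤ ∑ g' ∈ Finset.Icc (J - z + 1) J,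
        δ g' (X ω) * (pscore P X S J (J - g' + 1) ω - pscore P X S J (J - g') ω)) :
    piZ P Z z * ∫ ω, Y z ω * indG J S g ω ∂P
      = ∫ ω,
          (δ g (X ω) * pscore P X S J z ω
              / ∑ g' ∈ Finset.Icc (J - z + 1) J,
                  δ g' (X ω) * (pscore P X S J (J - g' + 1) ω - pscore P X S J (J - g') ω))
            * ((pscore P X S J (J - g + 1) ω - pscore P X S J (J - g) ω)
                / pscore P X S J z ω)
            * (Yobs J Z Y ω * Sobs J Z S ω * indic Z z ω) ∂P :=
  statement17_general P J X Z S Y hset hrand hmono hpos z g hz hg δ hδm hδb hδdef hden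

end TruncationByDeath
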